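/- Let q be a prime, A a group of exponent q and order q³, B a subgroup of order q of Z(A). Suppose A acts on a finite q'-group G = PH with P a normal abelian A-invariant p-subgroup and H an A-invariant nilpotent p'-subgroup. Then [P, C_H(B)] is contained in the product ∏_{a ∈ A, a≠1} [C_P(a), C_H(a)]. -/

import Mathlib

/-!
Let `σ, τ` be commuting automorphisms of an abelian group with `σ^q = τ^q = 1`, and write
`N_c(x) = ∏_{i<q} c^i x`. Then `(∏_j N_{στ^j}(x)) · N_τ(x) = x^q · W(x)` with
`W(x) = ∏_{i,j} σ^i τ^j x` fixed by `σ`, so `x^q` lies in the subgroup generated by the fixed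
points of `τ` and of the `στ^j`. In a `q'`-group, fixed points of a `q`-automorphism lift through
invariant quotients, so along the derived series the same holds in any solvable `q'`-group; as
`x ↦ x^q` is invertible there, such a group is generated by these fixed points.

Let `R = ∏_{a ≠ 1} [C_P(a), C_H(a)]`. If `h ∈ C_H(B)` is also fixed by some `d ∉ B`, apply this to
the abelian group `P` and the pair `d, b` with `1 ≠ b ∈ B`: the `x ∈ P` with `[x, h] ∈ R` form a
subgroup containing every `C_P(c)` with `1 ≠ c ∈ ⟨d, b⟩`. Then apply it to the nilpotent group
`C_H(B)` and `a₁, a₂` with `a₂ ∉ B` and all `a₁ a₂^j ∉ B`: since `A/B` has order `q²` it is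
abelian, so `a₁` and `a₂` commute on `C_H(B)`, and `C_H(B)` lies in `{h | [P, h] ≤ R}`.
-/

/-- The fixed-point subgroup of a single automorphism. -/
def autFixed {G : Type*} [Group G] (f : MulAut G) : Subgroup G where
  carrier := {g | f g = g}
  one_mem' := map_one f
  mul_mem' := by intro a b ha hb; simp only [Set.mem_setOf_eq, map_mul] at *; rw [ha, hb]
  inv_mem' := by intro a ha; simp only [Set.mem_setOf_eq, map_inv] at *; rw [ha]

open MulAction Pointwise Finset
open scoped commutatorElement

section Abelian

variable {q : ℕ} [Fact q.Prime]

theorem ZMod.prod_prod_mul_mul_prod_zero {M : Type*} [CommMonoid M] (u : ZMod q → ZMod q → M) :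
    (∏ j, ∏ i, u i (i * j)) * ∏ j, u 0 j = u 0 0 ^ q * ∏ i, ∏ j, u i j := by
  have hrow : ∀ i ∈ univ.erase (0 : ZMod q), ∏ j, u i (i * j) = ∏ j, u i j := fun i hi =>
    Equiv.prod_comp (Equiv.mulLeft₀ i (ne_of_mem_erase hi)) (u i)
  rw [prod_comm, ← mul_prod_erase univ _ (mem_univ 0), ← mul_prod_erase univ (fun i => ∏ j, u i j)
    (mem_univ 0), prod_congr rfl hrow]
  simp only [zero_mul, prod_const, card_univ, ZMod.card]
  rw [mul_assoc, mul_comm (∏ i ∈ _, _)]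

theorem ZMod.prod_mul_pow_val {M X : Type*} [Monoid M] [CommMonoid X] {a : M} (ha : a ^ q = 1)
    (F : M → X) : ∏ i : ZMod q, F (a * a ^ i.val) = ∏ i : ZMod q, F (a ^ i.val) := by
  have hsucc : ∀ i : ZMod q, a * a ^ i.val = a ^ (i + 1).val := fun i => by
    rw [← pow_succ', pow_eq_pow_mod _ ha, ZMod.val_add, ZMod.val_one, add_comm]
  simp only [hsucc]
  exact Equiv.prod_comp (Equiv.addRight (1 : ZMod q)) (fun i => F (a ^ i.val))

theorem Monoid.End.pow_mem_of_fixedPoints_le {X : Type*} [CommGroup X] {f g : Monoid.End X}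
    (hfg : Commute f g) (hf : f ^ q = 1) (hg : g ^ q = 1) {T : Subgroup X}
    (hgT : ∀ y, g y = y → y ∈ T) (hfgT : ∀ (j : ℕ) y, (f * g ^ j) y = y → y ∈ T) (x : X) :
    x ^ q ∈ T := by
  have norm_mem (c : Monoid.End X) (hc : c ^ q = 1) (hcT : ∀ y, c y = y → y ∈ T) :
      ∏ i : ZMod q, (c ^ i.val) x ∈ T :=
    hcT _ (by rw [map_prod]; exact ZMod.prod_mul_pow_val hc (fun m => m x))
  have hW : ∏ i : ZMod q, ∏ j : ZMod q, (f ^ i.val * g ^ j.val) x ∈ T := by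
    refine hfgT 0 _ ?_
    simp only [pow_zero, mul_one, map_prod]
    exact ZMod.prod_mul_pow_val hf (fun m => ∏ j : ZMod q, (m * g ^ j.val) x)
  have hpow (i j : ZMod q) : f ^ i.val * g ^ (i * j).val = (f * g ^ j.val) ^ i.val := by
    rw [(hfg.pow_right _).mul_pow, ← pow_mul, ZMod.val_mul, ← pow_eq_pow_mod _ hg, mul_comm]
  have key := ZMod.prod_prod_mul_mul_prod_zero (fun i j : ZMod q => (f ^ i.val * g ^ j.val) x)
  simp only [hpow, ZMod.val_zero, pow_zero, one_mul, mul_one, Monoid.End.coe_one, id] at key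
  rw [eq_mul_inv_of_mul_eq key.symm]
  refine mul_mem (mul_mem (prod_mem fun j _ => norm_mem _ ?_ (hfgT j.val)) (norm_mem g hg hgT))
    (inv_mem hW)
  rw [(hfg.pow_right _).mul_pow, hf, one_mul, ← pow_mul, pow_mul', hg, one_pow]

end Abelian

section

variable {G : Type*} [Group G]

@[simp]
theorem mem_autFixed {f : MulAut G} {x : G} : x ∈ autFixed f ↔ f x = x := Iff.rfl

theorem autFixed_le_autFixed_pow (f : MulAut G) (n : ℕ) : autFixed f ≤ autFixed (f ^ n) := by
  intro x hx
  induction n with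
  | zero => rfl
  | succ n ih => rw [mem_autFixed, pow_succ, MulAut.mul_apply, hx, ih]

theorem MulAut.apply_mem_iff_of_mem_stabilizer {c : MulAut G} {N : Subgroup G}
    (hc : c ∈ stabilizer (MulAut G) N) {x : G} : c x ∈ N ↔ x ∈ N := by
  nth_rw 1 [← hc]
  exact Subgroup.smul_mem_pointwise_smul_iff

theorem MulAut.exists_fixed_mem_leftCoset [Finite G] {q : ℕ} [Fact q.Prime] {c : MulAut G}
    (hc : c ^ q = 1) {N : Subgroup G} (hN : c ∈ stabilizer (MulAut G) N)
    (hNq : ¬ q ∣ Nat.card N) {z : G} (hz : c z ∈ z • (N : Set G)) :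
    ∃ w ∈ z • (N : Set G), c w = w := by
  let C := z • (N : Set G)
  have := Fintype.ofFinite C
  have hstable (x : G) : MulAut.toPerm G c x ∈ C ↔ x ∈ C := by
    rw [mem_leftCoset_iff, SetLike.mem_coe] at hz
    change c x ∈ C ↔ x ∈ C
    simp only [C, mem_leftCoset_iff, SetLike.mem_coe]
    rw [show z⁻¹ * c x = z⁻¹ * c z * c (z⁻¹ * x) by simp [mul_assoc],
      Subgroup.mul_mem_cancel_left _ hz, MulAut.apply_mem_iff_of_mem_stabilizer hN]
  have hcard : ¬ q ∣ Fintype.card C := by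
    rwa [← Nat.card_eq_fintype_card, Nat.card_congr (Subgroup.leftCosetEquivSubgroup z)]
  have hσ : (MulAut.toPerm G c).subtypePerm hstable ^ q ^ 1 = 1 := by
    ext x
    simp [Equiv.Perm.subtypePerm_pow, ← map_pow, hc]
  obtain ⟨⟨w, hw⟩, hfix⟩ := Equiv.Perm.exists_fixed_point_of_prime hcard hσ
  exact ⟨w, hw, congrArg Subtype.val hfix⟩

section QuotientEnd

variable (K N : Subgroup G) [(N.subgroupOf K).Normal]

def quotientEnd :
    ↥(stabilizer (MulAut G) K ⊓ stabilizer (MulAut G) N) →* Monoid.End (K ⧸ N.subgroupOf K) where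
  toFun c := QuotientGroup.map _ _ ((c.1.toMonoidHom.comp K.subtype).codRestrict K
    fun x => (MulAut.apply_mem_iff_of_mem_stabilizer c.2.1).2 x.2)
    fun _ hx => (MulAut.apply_mem_iff_of_mem_stabilizer c.2.2).2 hx
  map_one' := DFunLike.ext _ _ fun y => QuotientGroup.induction_on y fun _ => rfl
  map_mul' _ _ := DFunLike.ext _ _ fun y => QuotientGroup.induction_on y fun _ => rfl

variable {K N}

theorem quotientEnd_mk (c : ↥(stabilizer (MulAut G) K ⊓ stabilizer (MulAut G) N)) (x : K) :
    quotientEnd K N c x = (⟨c.1 x, (MulAut.apply_mem_iff_of_mem_stabilizer c.2.1).2 x.2⟩ : K) :=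
  rfl

theorem exists_mk_eq_of_quotientEnd_apply_eq [Finite G] {q : ℕ} [Fact q.Prime]
    (hNK : N ≤ K) (hNq : ¬ q ∣ Nat.card N)
    {c : ↥(stabilizer (MulAut G) K ⊓ stabilizer (MulAut G) N)} (hc : c.1 ^ q = 1)
    {y : K ⧸ N.subgroupOf K} (hy : quotientEnd K N c y = y) :
    ∃ w : K, c.1 w = w ∧ (w : K ⧸ N.subgroupOf K) = y := by
  obtain ⟨u, rfl⟩ := QuotientGroup.mk_surjective y
  rw [quotientEnd_mk, eq_comm, QuotientGroup.eq, Subgroup.mem_subgroupOf] at hy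
  obtain ⟨w, hwu, hw⟩ := MulAut.exists_fixed_mem_leftCoset hc c.2.2 hNq
    ((mem_leftCoset_iff _).2 hy)
  rw [mem_leftCoset_iff, SetLike.mem_coe] at hwu
  have hwK : w ∈ K := by simpa using mul_mem u.2 (hNK hwu)
  exact ⟨⟨w, hwK⟩, hw, (QuotientGroup.eq.2 (Subgroup.mem_subgroupOf.2 hwu)).symm⟩

end QuotientEnd

theorem pow_mem_of_inf_autFixed_le [Finite G] {q : ℕ} [Fact q.Prime] {K N T : Subgroup G}
    (hNK : N ≤ K) (hKN : ⁅K, K⁆ ≤ N) (hNq : ¬ q ∣ Nat.card N) {σ τ : MulAut G}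
    (hσ : σ ∈ stabilizer (MulAut G) K ⊓ stabilizer (MulAut G) N)
    (hτ : τ ∈ stabilizer (MulAut G) K ⊓ stabilizer (MulAut G) N)
    (hστ : ∀ x ∈ K, σ (τ x) = τ (σ x)) (hτq : τ ^ q = 1) (hστq : ∀ j : ℕ, (σ * τ ^ j) ^ q = 1)
    (hNT : N ≤ T) (hτT : K ⊓ autFixed τ ≤ T) (hστT : ∀ j : ℕ, K ⊓ autFixed (σ * τ ^ j) ≤ T)
    {z : G} (hz : z ∈ K) : z ^ q ∈ T := by
  have : (N.subgroupOf K).Normal := ⟨fun n hn g => by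
    rw [Subgroup.mem_subgroupOf] at hn ⊢
    simpa [commutatorElement_def] using
      mul_mem (hKN (Subgroup.commutator_mem_commutator g.2 (hNK hn))) hn⟩
  have : IsMulCommutative (K ⧸ N.subgroupOf K) :=
    Subgroup.Normal.quotient_commutative_iff_commutator_le.2 <| by
      rw [commutator_def, Subgroup.commutator_le]
      intro x _ y _
      exact hKN (Subgroup.commutator_mem_commutator x.2 y.2)
  let T' : Subgroup (K ⧸ N.subgroupOf K) := (T.subgroupOf K).map (QuotientGroup.mk' _)
  have hlift (c : ↥(stabilizer (MulAut G) K ⊓ stabilizer (MulAut G) N)) (hc : c.1 ^ q = 1)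
      (hcT : K ⊓ autFixed c.1 ≤ T) (y) (hy : quotientEnd K N c y = y) : y ∈ T' := by
    obtain ⟨w, hw, rfl⟩ := exists_mk_eq_of_quotientEnd_apply_eq hNK hNq hc hy
    exact Subgroup.mem_map_of_mem _ (hcT ⟨w.2, hw⟩)
  have hend (c : ↥(stabilizer (MulAut G) K ⊓ stabilizer (MulAut G) N)) (hc : c.1 ^ q = 1) :
      quotientEnd K N c ^ q = 1 := by
    rw [← map_pow, show c ^ q = 1 from Subtype.ext hc, map_one]
  have hcomm : Commute (quotientEnd K N ⟨σ, hσ⟩) (quotientEnd K N ⟨τ, hτ⟩) :=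
    DFunLike.ext _ _ fun y => QuotientGroup.induction_on y fun x =>
      congrArg QuotientGroup.mk (Subtype.ext (hστ x x.2))
  open scoped IsMulCommutative in
  obtain ⟨t, ht, hzt⟩ := Monoid.End.pow_mem_of_fixedPoints_le hcomm
    (hend _ (by simpa using hστq 0)) (hend _ hτq) (hlift _ hτq hτT)
    (fun j => by rw [← map_pow, ← map_mul]; exact hlift _ (hστq j) (hστT j))
    ((⟨z, hz⟩ : K) : K ⧸ N.subgroupOf K)
  rw [QuotientGroup.mk'_apply, ← QuotientGroup.mk_pow, QuotientGroup.eq,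
    Subgroup.mem_subgroupOf] at hzt
  have htz := mul_mem (Subgroup.mem_subgroupOf.1 ht) (hNT hzt)
  simpa using htz

theorem MulAut.mem_stabilizer_commutator {c : MulAut G} {A B : Subgroup G}
    (hA : c ∈ stabilizer (MulAut G) A) (hB : c ∈ stabilizer (MulAut G) B) :
    c ∈ stabilizer (MulAut G) ⁅A, B⁆ :=
  (Subgroup.map_commutator A B c.toMonoidHom).trans (congrArg₂ _ hA hB)

theorem Subgroup.mem_of_pow_mem_of_coprime [Finite G] {q : ℕ} (hG : (Nat.card G).Coprime q)
    {S : Subgroup G} {z : G} (hz : z ^ q ∈ S) : z ∈ S := by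
  obtain ⟨m, hm⟩ := exists_pow_eq_self_of_coprime
    ((Nat.Coprime.coprime_dvd_left (_root_.orderOf_dvd_natCard z) hG).symm)
  exact hm ▸ pow_mem hz m

theorem le_of_inf_autFixed_le [Finite G] {q : ℕ} [hq : Fact q.Prime] (hG : (Nat.card G).Coprime q)
    {K S : Subgroup G} [Group.IsSolvable K] {σ τ : MulAut G}
    (hσ : σ ∈ stabilizer (MulAut G) K) (hτ : τ ∈ stabilizer (MulAut G) K)
    (hστ : ∀ x ∈ K, σ (τ x) = τ (σ x)) (hτq : τ ^ q = 1) (hστq : ∀ j : ℕ, (σ * τ ^ j) ^ q = 1)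
    (hτS : K ⊓ autFixed τ ≤ S) (hστS : ∀ j : ℕ, K ⊓ autFixed (σ * τ ^ j) ≤ S) : K ≤ S := by
  let D (n : ℕ) : Subgroup G := (derivedSeries K n).map K.subtype
  have hD0 : D 0 = K := by
    simp only [D, derivedSeries_zero, ← MonoidHom.range_eq_map, Subgroup.range_subtype]
  have hDsucc (n : ℕ) : D (n + 1) = ⁅D n, D n⁆ := by
    simp only [D, derivedSeries_succ, Subgroup.map_commutator]
  have hDK (n : ℕ) : D n ≤ K := Subgroup.map_subtype_le _
  have hDstab {c : MulAut G} (hc : c ∈ stabilizer (MulAut G) K) (n : ℕ) :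
      c ∈ stabilizer (MulAut G) (D n) := by
    induction n with
    | zero => rwa [hD0]
    | succ n ih => rw [hDsucc]; exact MulAut.mem_stabilizer_commutator ih ih
  have hNq (N : Subgroup G) : ¬ q ∣ Nat.card N := fun h =>
    (Nat.Prime.coprime_iff_not_dvd hq.out).1 hG.symm (h.trans N.card_subgroup_dvd_card)
  have hstep (n : ℕ) (hn : D (n + 1) ≤ S) : D n ≤ S := fun z hz =>
    Subgroup.mem_of_pow_mem_of_coprime hG <| pow_mem_of_inf_autFixed_le
      (Subgroup.map_mono (derivedSeries_antitone K n.le_succ)) (hDsucc n).ge (hNq _)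
      ⟨hDstab hσ n, hDstab hσ (n + 1)⟩ ⟨hDstab hτ n, hDstab hτ (n + 1)⟩
      (fun x hx => hστ x (hDK n hx)) hτq hστq hn ((inf_le_inf_right _ (hDK n)).trans hτS)
      (fun j => (inf_le_inf_right _ (hDK n)).trans (hστS j)) hz
  obtain ⟨m, hm⟩ := Group.IsSolvable.solvable (G := K)
  have hDm : D m ≤ S := by simp only [D, hm, Subgroup.map_bot, bot_le]
  exact hD0 ▸ Nat.decreasingInduction (motive := fun n _ => D n ≤ S)
    (fun k _ => hstep k) hDm (Nat.zero_le m)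

theorem Subgroup.commutatorElement_mem_left {P : Subgroup G} [P.Normal] {x : G} (hx : x ∈ P)
    (g : G) : ⁅x, g⁆ ∈ P :=
  commutator_le_left P ⊤ (commutator_mem_commutator hx trivial)

namespace Subgroup

variable (P R : Subgroup G) [P.Normal]

def commutatorColon : Subgroup G where
  carrier := {h | ∀ x ∈ P, ⁅x, h⁆ ∈ R}
  one_mem' x _ := by simp
  mul_mem' {h₁ h₂} h₁R h₂R x hx := by
    have hconj : h₁ * ⁅x, h₂⁆ * h₁⁻¹ = ⁅x, h₂⁆ * ⁅⁅x, h₂⁆⁻¹, h₁⁆ := by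
      rw [commutatorElement_def ⁅x, h₂⁆⁻¹]
      group
    rw [commutatorElement_mul_right_eq_mul_conj, mul_assoc _ h₁, mul_assoc, hconj]
    exact mul_mem (h₁R x hx)
      (mul_mem (h₂R x hx) (h₁R _ (inv_mem (commutatorElement_mem_left hx h₂))))
  inv_mem' {h} hR x hx := by
    rw [show ⁅x, h⁻¹⁆ = ⁅h⁻¹ * x * h, h⁆⁻¹ by simp [commutatorElement_def, mul_assoc]]
    exact inv_mem (hR _ (by simpa using Normal.conj_mem ‹_› x hx h⁻¹))

variable {P R}

theorem le_commutatorColon_iff {L : Subgroup G} : L ≤ P.commutatorColon R ↔ ⁅P, L⁆ ≤ R :=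
  ⟨fun h => commutator_le.2 fun x hx _ hy => h hy x hx,
    fun h _ hy x hx => commutator_le.1 h x hx _ hy⟩

end Subgroup

section Action

variable {A : Type*} [Group A] (φ : A →* MulAut G)

theorem inf_autFixed_le_commutatorColon [Finite G] {q : ℕ} [Fact q.Prime]
    (hG : (Nat.card G).Coprime q) (hA : ∀ a : A, a ^ q = 1)
    {P H R : Subgroup G} [P.Normal] (hPab : ∀ x ∈ P, ∀ y ∈ P, x * y = y * x)
    (hP : ∀ a, φ a ∈ stabilizer (MulAut G) P)
    (hR : ∀ a : A, a ≠ 1 → ⁅P ⊓ autFixed (φ a), H ⊓ autFixed (φ a)⁆ ≤ R)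
    {b d : A} (hb : b ≠ 1) (hdb : Commute d b) (hd : ∀ j : ℕ, d * b ^ j ≠ 1) :
    H ⊓ autFixed (φ b) ⊓ autFixed (φ d) ≤ P.commutatorColon R := by
  rintro h ⟨⟨hH, hbh⟩, hdh⟩
  let T : Subgroup G :=
    { carrier := {x | x ∈ P ∧ ⁅x, h⁆ ∈ R}
      one_mem' := ⟨one_mem P, by simp⟩
      mul_mem' := fun {x y} ⟨hx, hxR⟩ ⟨hy, hyR⟩ => ⟨mul_mem hx hy, by
        rw [commutatorElement_mul_left_eq_conj_mul,
          mul_inv_eq_of_eq_mul (hPab x hx _ (Subgroup.commutatorElement_mem_left hy h))]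
        exact mul_mem hyR hxR⟩
      inv_mem' := fun {x} ⟨hx, hxR⟩ => ⟨inv_mem hx, by
        rw [commutatorElement_inv_left, ← commutatorElement_inv, mul_assoc,
          ← hPab x hx _ (inv_mem (Subgroup.commutatorElement_mem_left hx h)), inv_mul_cancel_left]
        exact inv_mem hxR⟩ }
  have : Group.IsSolvable P := Group.isSolvable_of_comm fun x y => Subtype.ext (hPab _ x.2 _ y.2)
  have hφq (a : A) : φ a ^ q = 1 := by rw [← map_pow, hA, map_one]
  have hPT : P ≤ T := le_of_inf_autFixed_le hG (σ := φ d) (τ := φ b) (hP d) (hP b)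
    (fun x _ => by rw [← MulAut.mul_apply, ← map_mul, hdb.eq, map_mul, MulAut.mul_apply])
    (hφq b) (fun j => by rw [← map_pow, ← map_mul, hφq])
    (fun x ⟨hx, hbx⟩ => ⟨hx, hR b hb (Subgroup.commutator_mem_commutator ⟨hx, hbx⟩ ⟨hH, hbh⟩)⟩)
    (fun j x hx => ⟨hx.1, hR _ (hd j) (Subgroup.commutator_mem_commutator
      (by rwa [map_mul, map_pow]) ⟨hH, show φ (d * b ^ j) h = h by
        rw [map_mul, map_pow, MulAut.mul_apply, autFixed_le_autFixed_pow _ j hbh]; exact hdh⟩)⟩)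
  exact fun x hx => (hPT hx).2

theorem mem_stabilizer_inf_iInf_autFixed {B : Subgroup A} [B.Normal] {K : Subgroup G} {a : A}
    (hK : φ a ∈ stabilizer (MulAut G) K) :
    φ a ∈ stabilizer (MulAut G) (K ⊓ ⨅ b ∈ B, autFixed (φ b)) := by
  ext x
  have hconj (b : A) : φ b ((φ a)⁻¹ x) = (φ a)⁻¹ (φ (a * b * a⁻¹) x) := by
    simp only [map_mul, map_inv, MulAut.mul_apply, MulAut.inv_apply, MulEquiv.symm_apply_apply]
  simp only [Subgroup.mem_pointwise_smul_iff_inv_smul_mem, Subgroup.mem_inf, Subgroup.mem_iInf,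
    mem_autFixed, MulAut.smul_def, hconj, EmbeddingLike.apply_eq_iff_eq,
    MulAut.apply_mem_iff_of_mem_stabilizer (inv_mem hK)]
  refine and_congr_right fun _ =>
    ⟨fun h b hb => ?_, fun h b hb => h _ (‹B.Normal›.conj_mem b hb a)⟩
  simpa [mul_assoc] using h _ (‹B.Normal›.conj_mem b hb a⁻¹)

theorem apply_apply_comm_of_mem_iInf_autFixed {B : Subgroup A} (hAB : commutator A ≤ B)
    {x : G} (hx : x ∈ ⨅ b ∈ B, autFixed (φ b)) (a a' : A) : φ a (φ a' x) = φ a' (φ a x) := by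
  have hc : (a' * a)⁻¹ * (a * a') ∈ B := hAB <| by
    simpa [commutator_def, commutatorElement_def, mul_assoc] using
      Subgroup.commutator_mem_commutator (Subgroup.mem_top a⁻¹) (Subgroup.mem_top a'⁻¹)
  have hcx : φ ((a' * a)⁻¹ * (a * a')) x = x := Subgroup.mem_iInf.1 (Subgroup.mem_iInf.1 hx _) hc
  rw [← MulAut.mul_apply, ← map_mul, ← mul_inv_cancel_left (a' * a) (a * a'), map_mul,
    MulAut.mul_apply, hcx, map_mul, MulAut.mul_apply]

end Action

theorem Subgroup.exists_mul_pow_notMem {A : Type*} [Group A] {q : ℕ} (hq : 0 < q)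
    (hA : ∀ a : A, a ^ q = 1) {B : Subgroup A} [B.Normal] (hB : q < B.index) :
    ∃ a₁ a₂ : A, a₂ ∉ B ∧ ∀ j : ℕ, a₁ * a₂ ^ j ∉ B := by
  have hzpowers (x : A ⧸ B) : ∃ y, y ∉ zpowers x := by
    by_contra! h
    have hx : x ^ q = 1 := by
      obtain ⟨a, rfl⟩ := QuotientGroup.mk_surjective x
      rw [← QuotientGroup.mk_pow, hA, QuotientGroup.mk_one]
    have hcard := Nat.card_zpowers x ▸ Nat.le_of_dvd hq (orderOf_dvd_of_pow_eq_one hx)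
    rw [(eq_top_iff.2 fun y _ => h y : zpowers x = ⊤), card_top, ← index_eq_card] at hcard
    omega
  obtain ⟨y₂, hy₂⟩ := hzpowers 1
  obtain ⟨y₁, hy₁⟩ := hzpowers y₂
  obtain ⟨a₂, rfl⟩ := QuotientGroup.mk_surjective y₂
  obtain ⟨a₁, rfl⟩ := QuotientGroup.mk_surjective y₁
  refine ⟨a₁, a₂, fun h => hy₂ ?_, fun j h => hy₁ ?_⟩
  · rw [(QuotientGroup.eq_one_iff a₂).2 h]
    exact one_mem _
  · have h1 : (a₁ : A ⧸ B) * (a₂ : A ⧸ B) ^ j = 1 := (QuotientGroup.eq_one_iff _).2 h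
    rw [eq_inv_of_mul_eq_one_left h1]
    exact inv_mem (pow_mem (mem_zpowers _) j)

end

theorem stmt7_general {A G : Type*} [Group A] [Group G] [Finite G] {q : ℕ}
    (hq : q.Prime)
    (hcardA : Nat.card A = q ^ 3) (hexp : Monoid.exponent A = q)
    (hcop : Nat.Coprime (Nat.card G) q)
    (B : Subgroup A) (hBZ : B ≤ Subgroup.center A) (hB : Nat.card B = q)
    (φ : A →* MulAut G) (P H : Subgroup G) [P.Normal]
    (hPinv : ∀ a : A, P.map (φ a).toMonoidHom = P)
    (hHinv : ∀ a : A, H.map (φ a).toMonoidHom = H)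
    (hPab : ∀ x ∈ P, ∀ y ∈ P, x * y = y * x)
    (hHnil : Group.IsNilpotent H) :
    ⁅P, H ⊓ ⨅ b ∈ B, autFixed (φ b)⁆ ≤
      ⨆ a ∈ {a : A | a ≠ 1}, ⁅P ⊓ autFixed (φ a), H ⊓ autFixed (φ a)⁆ := by
  have := Fact.mk hq
  have hA (a : A) : a ^ q = 1 := hexp ▸ Monoid.pow_exponent_eq_one a
  have hφ (a : A) : φ a ^ q = 1 := by rw [← map_pow, hA, map_one]
  have : B.Normal :=
    ⟨fun b hb a => by rwa [Subgroup.mem_center_iff.1 (hBZ hb) a, mul_inv_cancel_right]⟩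
  have hindex : B.index = q ^ 2 := by
    have := B.card_mul_index
    rw [hB, hcardA, pow_succ' q 2] at this
    exact Nat.eq_of_mul_eq_mul_left hq.pos this
  have hAB : commutator A ≤ B := Subgroup.Normal.quotient_commutative_iff_commutator_le.1
    (IsPGroup.isMulCommutative_of_card_eq_prime_sq (B.index_eq_card ▸ hindex))
  obtain ⟨b, hbB, hb⟩ : ∃ b ∈ B, b ≠ 1 := B.bot_or_exists_ne_one.resolve_left fun h => by
    rw [h, Subgroup.card_bot] at hB; exact hq.one_lt.ne hB
  obtain ⟨a₁, a₂, ha₂, ha₁₂⟩ := Subgroup.exists_mul_pow_notMem hq.pos hA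
    (hindex ▸ lt_self_pow₀ hq.one_lt one_lt_two)
  set R := ⨆ a ∈ {a : A | a ≠ 1}, ⁅P ⊓ autFixed (φ a), H ⊓ autFixed (φ a)⁆
  set H₀ := H ⊓ ⨅ b ∈ B, autFixed (φ b)
  have key (d : A) (hd : d ∉ B) : H₀ ⊓ autFixed (φ d) ≤ P.commutatorColon R :=
    (inf_le_inf_right _ (inf_le_inf_left _ (iInf₂_le b hbB))).trans <|
      inf_autFixed_le_commutatorColon φ hcop hA hPab hPinv (fun a ha => le_iSup₂_of_le a ha le_rfl)
        hb (Subgroup.mem_center_iff.1 (hBZ hbB) d)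
        (fun j h => hd (by rw [mul_eq_one_iff_eq_inv.1 h]; exact inv_mem (pow_mem hbB j)))
  have : Group.IsSolvable H₀ :=
    Group.isSolvable_of_isSolvable_injective (Subgroup.inclusion_injective inf_le_left)
  refine Subgroup.le_commutatorColon_iff.1 (le_of_inf_autFixed_le hcop
    (mem_stabilizer_inf_iInf_autFixed φ (hHinv a₁)) (mem_stabilizer_inf_iInf_autFixed φ (hHinv a₂))
    (fun x hx => apply_apply_comm_of_mem_iInf_autFixed φ hAB (Subgroup.mem_inf.1 hx).2 a₁ a₂)
    (hφ a₂) (fun j => by rw [← map_pow, ← map_mul, hφ]) (key a₂ ha₂)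
    (fun j => by simpa using key _ (ha₁₂ j)))

/-- With `P` abelian: `[P, C_H(B)] ≤ ∏_{a ∈ A#} [C_P(a), C_H(a)]`. -/
theorem stmt7 {A G : Type*} [Group A] [Group G] [Finite A] [Finite G] {q p : ℕ}
    (hq : q.Prime) (hp : p.Prime)
    (hcardA : Nat.card A = q ^ 3) (hexp : Monoid.exponent A = q)
    (hcop : Nat.Coprime (Nat.card G) q)
    (B : Subgroup A) (hBZ : B ≤ Subgroup.center A) (hB : Nat.card B = q)
    (φ : A →* MulAut G) (P H : Subgroup G) [P.Normal]
    (hPinv : ∀ a : A, P.map (φ a).toMonoidHom = P)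
    (hHinv : ∀ a : A, H.map (φ a).toMonoidHom = H)
    (hPH : P ⊔ H = ⊤) (hPp : IsPGroup p P)
    (hPab : ∀ x ∈ P, ∀ y ∈ P, x * y = y * x)
    (hHnil : Group.IsNilpotent H) (hHp' : Nat.Coprime (Nat.card H) p) :
    ⁅P, H ⊓ ⨅ b ∈ B, autFixed (φ b)⁆ ≤
      ⨆ a ∈ {a : A | a ≠ 1}, ⁅P ⊓ autFixed (φ a), H ⊓ autFixed (φ a)⁆ :=
  stmt7_general hq hcardA hexp hcop B hBZ hB φ P H hPinv hHinv hPab hHnil
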